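/- The posets Q_n^C (C-distinguished bipartitions of n with interleaved dominance order) and P^C_{2n} (partitions of 2n with all odd parts of even multiplicity, dominance order) are isomorphic via the mutually inverse order-preserving maps Φ^C (restricted to Q_n^C) and Φ̂^C. -/

import Mathlib

open Finset

/-- Partial sum of the first `k` terms of a sequence of naturals. -/
def psum (π : ℕ → ℕ) (k : ℕ) : ℕ := ∑ i ∈ Finset.range k, π i

/-- A composition of `n`: almost all terms zero, summing to `n`. -/
def IsComposition (n : ℕ) (π : ℕ → ℕ) : Prop :=
  ∃ N, (∀ i, N ≤ i → π i = 0) ∧ psum π N = n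

/-- Dominance order: `l` dominates `π`. -/
def Dominates (l π : ℕ → ℕ) : Prop := ∀ k, psum π k ≤ psum l k

/-- A partition: weakly decreasing sequence. -/
def IsPartition (π : ℕ → ℕ) : Prop := ∀ i, π (i + 1) ≤ π i

/-- A quasi-partition: `π i ≥ π (i+2)` for all `i`. -/
def IsQuasiPartition (π : ℕ → ℕ) : Prop := ∀ i, π (i + 2) ≤ π i

/-- Interleaving of two sequences: `(ρ₁, σ₁, ρ₂, σ₂, …)` (0-indexed). -/
def interleave (ρ σ : ℕ → ℕ) (i : ℕ) : ℕ :=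
  if i % 2 = 0 then ρ (i / 2) else σ (i / 2)

/-- A bipartition of `n`: a pair of partitions whose interleaving sums to `n`. -/
def IsBipartition (n : ℕ) (ρ σ : ℕ → ℕ) : Prop :=
  IsPartition ρ ∧ IsPartition σ ∧ IsComposition n (interleave ρ σ)

/-- Interleaved dominance order on bipartitions: `(ρ;σ) ≤ (μ;ν)`. -/
def BiLE (ρ σ μ ν : ℕ → ℕ) : Prop :=
  Dominates (interleave μ ν) (interleave ρ σ)

/-- The map `Φ^C` on sequences: replace a consecutive pair `2s < 2t`
by `s+t, s+t` (pointwise description; replacements never overlap for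
quasi-partitions). -/
def phiC (π : ℕ → ℕ) : ℕ → ℕ
  | 0 => if π 0 < π 1 then (π 0 + π 1) / 2 else π 0
  | (j + 1) =>
      if π (j + 1) < π (j + 2) then (π (j + 1) + π (j + 2)) / 2
      else if π j < π (j + 1) then (π j + π (j + 1)) / 2
      else π (j + 1)

/-- `Φ^C` of a bipartition: apply `phiC` to the doubled interleaving. -/
def PhiC (ρ σ : ℕ → ℕ) : ℕ → ℕ := phiC (fun i => 2 * interleave ρ σ i)

/-- Membership in `P^C_{2n}`: partition of `2n` with every odd part of even
multiplicity. -/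
def IsPC (n : ℕ) (l : ℕ → ℕ) : Prop :=
  IsPartition l ∧ IsComposition (2 * n) l ∧
    ∀ a : ℕ, Odd a → Even ({i | l i = a}.ncard)

/-- C-distinguished: `μ i ≥ ν i - 1` and `ν i ≥ μ (i+1) - 1`. -/
def QC (μ ν : ℕ → ℕ) : Prop :=
  ∀ i, ν i ≤ μ i + 1 ∧ μ (i + 1) ≤ ν i + 1

/-- B-distinguished: `μ i ≥ ν i - 2` and `ν i ≥ μ (i+1)`. -/
def QB (μ ν : ℕ → ℕ) : Prop :=
  ∀ i, ν i ≤ μ i + 2 ∧ μ (i + 1) ≤ ν i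

/-- Special: `μ i ≥ ν i - 1` and `ν i ≥ μ (i+1)`. -/
def QS (μ ν : ℕ → ℕ) : Prop :=
  ∀ i, ν i ≤ μ i + 1 ∧ μ (i + 1) ≤ ν i

/-- The condition defining `Q_n^{B,2}`: `μ i ≥ ν i - 2`. -/
def QB2 (μ ν : ℕ → ℕ) : Prop := ∀ i, ν i ≤ μ i + 2

/-- For an antitone sequence, the starting index of the run of equal values
containing index `i`. -/
noncomputable def runStart (l : ℕ → ℕ) (i : ℕ) : ℕ := {j | l i < l j}.ncard

/-- The map `Φ̂^C`, pointwise: halve even parts; replace an (even-length)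
maximal run of an odd part `2k+1` with `k, k+1, k, k+1, …`. -/
noncomputable def hphiC (l : ℕ → ℕ) (i : ℕ) : ℕ :=
  if Even (l i) then l i / 2
  else if Even (i - runStart l i) then l i / 2 else l i / 2 + 1

/-- Partial sums of an integer sequence. -/
def zsum (π : ℕ → ℤ) (k : ℕ) : ℤ := ∑ i ∈ Finset.range k, π i

/-- Dominance order on integer sequences. -/
def ZDominates (l π : ℕ → ℤ) : Prop := ∀ k, zsum π k ≤ zsum l k

/-- The interleaved integer sequence `(2ρ₁+1, 2σ₁−1, 2ρ₂+1, 2σ₂−1, …)`. -/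
def interB (ρ σ : ℕ → ℕ) (i : ℕ) : ℤ :=
  if i % 2 = 0 then 2 * (ρ (i / 2) : ℤ) + 1 else 2 * (σ (i / 2) : ℤ) - 1

/-- The map `Φ^B` on integer sequences: replace a consecutive pair `s < t`
by `(s+t)/2, (s+t)/2` (pointwise description). -/
def phiB (π : ℕ → ℤ) : ℕ → ℤ
  | 0 => if π 0 < π 1 then (π 0 + π 1) / 2 else π 0
  | (j + 1) =>
      if π (j + 1) < π (j + 2) then (π (j + 1) + π (j + 2)) / 2
      else if π j < π (j + 1) then (π j + π (j + 1)) / 2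
      else π (j + 1)

/-- `Φ^B` of a bipartition. -/
def PhiB (ρ σ : ℕ → ℕ) : ℕ → ℤ := phiB (interB ρ σ)

/-- Membership in `P^B_{2n+1}` for an integer sequence: nonnegative, weakly
decreasing, summing to `2n+1`, with every (positive) even part of even
multiplicity. -/
def IsPB (n : ℕ) (l : ℕ → ℤ) : Prop :=
  (∀ i, 0 ≤ l i) ∧ (∀ i, l (i + 1) ≤ l i) ∧
  (∃ N, (∀ i, N ≤ i → l i = 0) ∧ zsum l N = 2 * n + 1) ∧
  ∀ a : ℤ, 0 < a → Even a → Even ({i | l i = a}.ncard)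

/-- Membership in `P^B_{2n+1}` for a natural-number partition. -/
def IsPBN (n : ℕ) (l : ℕ → ℕ) : Prop :=
  IsPartition l ∧ IsComposition (2 * n + 1) l ∧
    ∀ a : ℕ, 0 < a → Even a → Even ({i | l i = a}.ncard)

/-- The map `Φ̂^B`, pointwise (0-indexed, so the paper's index `i` is `j+1`):
an odd part `λ_i` becomes `(λ_i + (−1)^i)/2`; a maximal run of an even part
`2k` starting at (0-indexed) position `s` becomes `k, k, …` if `s` is odd
(paper's `i` even) and `k−1, k+1, k−1, k+1, …` if `s` is even (paper's `i`
odd). -/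
noncomputable def hphiB (l : ℕ → ℕ) (j : ℕ) : ℕ :=
  if Odd (l j) then (if Even j then (l j - 1) / 2 else (l j + 1) / 2)
  else
    if Odd (runStart l j) then l j / 2
    else if Even (j - runStart l j) then l j / 2 - 1 else l j / 2 + 1

/-- First component of the special closure `(ρ;σ)°`. -/
def scRho (ρ σ : ℕ → ℕ) : ℕ → ℕ
  | 0 => if ρ 0 + 1 < σ 0 then (ρ 0 + σ 0) / 2 else ρ 0
  | (i + 1) =>
      if ρ (i + 1) + 1 < σ (i + 1) then (ρ (i + 1) + σ (i + 1)) / 2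
      else if σ i < ρ (i + 1) then (σ i + ρ (i + 1)) / 2
      else ρ (i + 1)

/-- Second component of the special closure `(ρ;σ)°`. -/
def scSigma (ρ σ : ℕ → ℕ) (i : ℕ) : ℕ :=
  if ρ i + 1 < σ i then (ρ i + σ i + 1) / 2
  else if σ i < ρ (i + 1) then (σ i + ρ (i + 1) + 1) / 2
  else σ i

/-- First component of the closure `(ρ;σ)~` into `Q_n^{B,2}`. -/
def tRho (ρ σ : ℕ → ℕ) (i : ℕ) : ℕ :=
  if ρ i + 2 < σ i then (ρ i + σ i + 1) / 2 - 1 else ρ i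

/-- Second component of the closure `(ρ;σ)~` into `Q_n^{B,2}`. -/
def tSigma (ρ σ : ℕ → ℕ) (i : ℕ) : ℕ :=
  if ρ i + 2 < σ i then (ρ i + σ i) / 2 + 1 else σ i

/-- First component of the closure `(ρ;σ)^B` into `Q_n^B`. -/
def bRho (ρ σ : ℕ → ℕ) : ℕ → ℕ
  | 0 => if ρ 0 + 2 < σ 0 then (ρ 0 + σ 0 + 1) / 2 - 1 else ρ 0
  | (i + 1) =>
      if ρ (i + 1) + 2 < σ (i + 1) then (ρ (i + 1) + σ (i + 1) + 1) / 2 - 1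
      else if σ i < ρ (i + 1) then (σ i + ρ (i + 1)) / 2
      else ρ (i + 1)

/-- Second component of the closure `(ρ;σ)^B` into `Q_n^B`. -/
def bSigma (ρ σ : ℕ → ℕ) (i : ℕ) : ℕ :=
  if ρ i + 2 < σ i then (ρ i + σ i) / 2 + 1
  else if σ i < ρ (i + 1) then (σ i + ρ (i + 1) + 1) / 2
  else σ i

/-- First component of the closure `(ρ;σ)^C` into `Q_n^C`. -/
def cRho (ρ σ : ℕ → ℕ) : ℕ → ℕ
  | 0 => if ρ 0 + 1 < σ 0 then (ρ 0 + σ 0) / 2 else ρ 0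
  | (i + 1) =>
      if ρ (i + 1) + 1 < σ (i + 1) then (ρ (i + 1) + σ (i + 1)) / 2
      else if σ i + 1 < ρ (i + 1) then (σ i + ρ (i + 1) + 1) / 2
      else ρ (i + 1)

/-- Second component of the closure `(ρ;σ)^C` into `Q_n^C`. -/
def cSigma (ρ σ : ℕ → ℕ) (i : ℕ) : ℕ :=
  if ρ i + 1 < σ i then (ρ i + σ i + 1) / 2
  else if σ i + 1 < ρ (i + 1) then (σ i + ρ (i + 1)) / 2
  else σ i

/-! Both maps are instances of one relation between a partition `l` and a sequence `h` rising by
at most one at each step: `l` is `2 * h` with one unit moved from `i + 1` to `i` at every ascent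
`h i < h (i + 1)`. On prefix sums this reads `psum l (k + 1) = 2 * psum h (k + 1) + [ascent at k]`,
so each side determines the other (`h` through `psum l / 2`), and dominance passes between them in
both directions. `Φ^C` produces `l` from `h = (ρ₁, σ₁, ρ₂, …)`, and `Φ̂^C` produces `h` from `l`,
since the pairs `k, k + 1` it writes into a run of `2k + 1` are exactly the ascents. Hence the two
maps are mutually inverse and order-preserving once each lands in the right set; for `Φ^C` this
comes down to odd runs having even length, which holds because the prefix sums at both ends of a
run are even. -/

def RiseLeOne (π : ℕ → ℕ) : Prop := ∀ i, π (i + 1) ≤ π i + 1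

structure IsCPartition (l : ℕ → ℕ) : Prop where
  isPartition : IsPartition l
  eventually_zero : ∃ N, ∀ i, N ≤ i → l i = 0
  even_ncard : ∀ a : ℕ, Odd a → Even {i | l i = a}.ncard

def IsDoubleOf (l h : ℕ → ℕ) : Prop :=
  ∀ k, psum l (k + 1) = 2 * psum h (k + 1) + if h k < h (k + 1) then 1 else 0

section Interleave

variable {ρ σ : ℕ → ℕ}

lemma interleave_two_mul (ρ σ : ℕ → ℕ) (j : ℕ) : interleave ρ σ (2 * j) = ρ j := by
  simp [interleave]

lemma interleave_two_mul_add_one (ρ σ : ℕ → ℕ) (j : ℕ) :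
    interleave ρ σ (2 * j + 1) = σ j := by
  simp [interleave, Nat.add_mod, Nat.add_div]

lemma interleave_evens_odds (f : ℕ → ℕ) :
    interleave (fun j => f (2 * j)) (fun j => f (2 * j + 1)) = f := by
  funext i
  obtain ⟨j, rfl | rfl⟩ := Nat.even_or_odd' i
  · exact interleave_two_mul _ _ j
  · exact interleave_two_mul_add_one _ _ j

lemma isQuasiPartition_interleave_iff :
    IsQuasiPartition (interleave ρ σ) ↔ IsPartition ρ ∧ IsPartition σ := by
  have hρ (j : ℕ) : interleave ρ σ (2 * j + 2) = ρ (j + 1) := interleave_two_mul ρ σ (j + 1)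
  have hσ (j : ℕ) : interleave ρ σ (2 * j + 1 + 2) = σ (j + 1) :=
    interleave_two_mul_add_one ρ σ (j + 1)
  constructor
  · intro h
    refine ⟨fun j => ?_, fun j => ?_⟩
    · simpa [hρ, interleave_two_mul] using h (2 * j)
    · simpa [hσ, interleave_two_mul_add_one] using h (2 * j + 1)
  · rintro ⟨hρ', hσ'⟩ i
    obtain ⟨j, rfl | rfl⟩ := Nat.even_or_odd' i
    · simpa [hρ, interleave_two_mul] using hρ' j
    · simpa [hσ, interleave_two_mul_add_one] using hσ' j

lemma riseLeOne_interleave_iff : RiseLeOne (interleave ρ σ) ↔ QC ρ σ := by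
  have hρ (j : ℕ) : interleave ρ σ (2 * j + 1 + 1) = ρ (j + 1) := interleave_two_mul ρ σ (j + 1)
  constructor
  · intro h j
    refine ⟨?_, ?_⟩
    · simpa [interleave_two_mul, interleave_two_mul_add_one] using h (2 * j)
    · simpa [hρ, interleave_two_mul_add_one] using h (2 * j + 1)
  · intro h i
    obtain ⟨j, rfl | rfl⟩ := Nat.even_or_odd' i
    · simpa [interleave_two_mul, interleave_two_mul_add_one] using (h j).1
    · simpa [hρ, interleave_two_mul_add_one] using (h j).2

end Interleave

lemma psum_succ (π : ℕ → ℕ) (k : ℕ) : psum π (k + 1) = psum π k + π k :=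
  Finset.sum_range_succ π k

lemma eq_of_psum_succ_eq {f g : ℕ → ℕ} (h : ∀ k, psum f (k + 1) = psum g (k + 1)) : f = g := by
  have hpsum : ∀ k, psum f k = psum g k
    | 0 => rfl
    | k + 1 => h k
  funext k
  have := psum_succ f k
  have := psum_succ g k
  have := hpsum k
  have := h k
  omega

namespace IsDoubleOf

variable {l l' h h' : ℕ → ℕ}

lemma of_succ (h0 : l 0 = 2 * h 0 + if h 0 < h 1 then 1 else 0)
    (hsucc : ∀ i, l (i + 1) + (if h i < h (i + 1) then 1 else 0) =
      2 * h (i + 1) + if h (i + 1) < h (i + 2) then 1 else 0) :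
    IsDoubleOf l h := by
  intro k
  induction k with
  | zero => simpa [psum] using h0
  | succ k ih =>
    rw [psum_succ l, ih, psum_succ h (k + 1)]
    have := hsucc k
    simp only [add_assoc, Nat.reduceAdd] at *
    omega

lemma psum_eq_div_two (hd : IsDoubleOf l h) (k : ℕ) :
    psum h (k + 1) = psum l (k + 1) / 2 := by
  rw [hd k]
  split_ifs <;> omega

lemma left_unique : Relator.LeftUnique IsDoubleOf :=
  fun _ _ _ hd hd' => eq_of_psum_succ_eq fun k => by rw [hd k, hd' k]

lemma right_unique : Relator.RightUnique IsDoubleOf :=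
  fun _ _ _ hd hd' => eq_of_psum_succ_eq fun k => by
    rw [hd.psum_eq_div_two, hd'.psum_eq_div_two]

lemma psum_eq_of_eq_zero (hd : IsDoubleOf l h) {N : ℕ} (hN : h N = 0) :
    psum l N = 2 * psum h N := by
  cases N with
  | zero => rfl
  | succ m => rw [hd m, if_neg (by omega), add_zero]

lemma dominates_iff (hd : IsDoubleOf l h) (hd' : IsDoubleOf l' h') :
    Dominates h' h ↔ Dominates l' l := by
  constructor
  · rintro hdom (_ | m)
    · exact le_rfl
    have := hdom m
    have := hdom (m + 1)
    have := hdom (m + 2)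
    have := psum_succ h (m + 1)
    have := psum_succ h' (m + 1)
    have := psum_succ h m
    have := psum_succ h' m
    rw [hd m, hd' m]
    simp only [add_assoc, Nat.reduceAdd] at *
    split_ifs <;> omega
  · rintro hdom (_ | m)
    · exact le_rfl
    have := hdom (m + 1)
    rw [hd m, hd' m] at this
    split_ifs at this <;> omega

lemma even_psum_succ (hd : IsDoubleOf l h) (hpair : ∀ i, h i < h (i + 1) → l (i + 1) = l i)
    {i : ℕ} (hne : l (i + 1) ≠ l i) : Even (psum l (i + 1)) := by
  rw [hd i, if_neg fun hA => hne (hpair i hA), add_zero]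
  exact even_two_mul _

end IsDoubleOf

lemma IsPartition.exists_setOf_eq_eq_Ico {l : ℕ → ℕ} (hl : IsPartition l) {a j : ℕ}
    (hj : l j < a) : ∃ s e : ℕ, {i | l i = a} = Finset.Ico s e := by
  have hanti : Antitone l := antitone_nat_of_succ_le hl
  refine ⟨Nat.find (⟨j, hj.le⟩ : ∃ i, l i ≤ a), Nat.find (⟨j, hj⟩ : ∃ i, l i < a), ?_⟩
  ext i
  simp only [Set.mem_ofPred_eq, Finset.coe_Ico, Set.mem_Ico, Nat.find_le_iff, Nat.lt_find_iff]
  constructor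
  · intro hi
    exact ⟨⟨i, le_rfl, hi.le⟩, fun m hm => by have := hanti hm; omega⟩
  · rintro ⟨⟨m, hm, hma⟩, hlt⟩
    have := hanti hm
    have := hlt i le_rfl
    omega

lemma IsDoubleOf.even_ncard_setOf_eq {l h : ℕ → ℕ} (hd : IsDoubleOf l h) (hl : IsPartition l)
    (hpair : ∀ i, h i < h (i + 1) → l (i + 1) = l i) {a j : ℕ} (hj : l j < a) (ha : Odd a) :
    Even {i | l i = a}.ncard := by
  obtain ⟨s, e, hse⟩ := hl.exists_setOf_eq_eq_Ico hj
  have mem : ∀ i, l i = a ↔ s ≤ i ∧ i < e := fun i => by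
    simpa using Set.ext_iff.1 hse i
  rw [hse, Set.ncard_coe_finset, Nat.card_Ico]
  rcases le_or_gt e s with hes | hse'
  · rw [Nat.sub_eq_zero_of_le hes]
    exact Even.zero
  have hsum : psum l e = psum l s + (e - s) * a := by
    rw [psum, psum, ← Finset.sum_range_add_sum_Ico _ hse'.le,
      Finset.sum_congr rfl fun i hi => (mem i).2 (Finset.mem_Ico.1 hi), Finset.sum_const,
      Nat.card_Ico, smul_eq_mul]
  have heven_s : Even (psum l s) := by
    cases s with
    | zero => exact Even.zero
    | succ t =>
      refine hd.even_psum_succ hpair fun heq => ?_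
      have := (mem t).1 (heq ▸ (mem (t + 1)).2 ⟨le_rfl, hse'⟩)
      omega
  have heven_e : Even (psum l e) := by
    obtain ⟨t, rfl⟩ : ∃ t, e = t + 1 := ⟨e - 1, by omega⟩
    refine hd.even_psum_succ hpair fun heq => ?_
    have := (mem (t + 1)).1 (heq ▸ (mem t).2 ⟨by omega, by omega⟩)
    omega
  rw [hsum, Nat.even_add] at heven_e
  exact (Nat.even_mul.1 (heven_e.1 heven_s)).resolve_right (Nat.not_even_iff_odd.2 ha)

section PhiC

variable {π : ℕ → ℕ}

lemma phiC_two_mul_zero (hs : RiseLeOne π) :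
    phiC (fun i => 2 * π i) 0 = if π 0 < π 1 then 2 * π 0 + 1 else 2 * π 0 := by
  have : π 1 ≤ π 0 + 1 := hs 0
  simp only [phiC]
  split_ifs <;> omega

lemma phiC_two_mul_succ (hs : RiseLeOne π) (j : ℕ) :
    phiC (fun i => 2 * π i) (j + 1) =
      if π (j + 1) < π (j + 2) then 2 * π (j + 1) + 1
      else if π j < π (j + 1) then 2 * π j + 1
      else 2 * π (j + 1) := by
  have := hs j
  have := hs (j + 1)
  simp only [phiC, add_assoc, Nat.reduceAdd] at *
  split_ifs <;> omega

lemma isDoubleOf_phiC (hs : RiseLeOne π) (hq : IsQuasiPartition π) :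
    IsDoubleOf (phiC fun i => 2 * π i) π := by
  refine IsDoubleOf.of_succ ?_ fun i => ?_
  · rw [phiC_two_mul_zero hs]
    split_ifs <;> omega
  · rw [phiC_two_mul_succ hs]
    have := hs i
    have := hq i
    split_ifs <;> omega

lemma phiC_two_mul_succ_of_lt (hs : RiseLeOne π) (hq : IsQuasiPartition π) {j : ℕ}
    (hA : π j < π (j + 1)) : phiC (fun i => 2 * π i) (j + 1) = phiC (fun i => 2 * π i) j := by
  have := hq j
  cases j with
  | zero => rw [phiC_two_mul_zero hs, phiC_two_mul_succ hs, if_pos hA, if_neg (by omega),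
      if_pos hA]
  | succ t =>
    have := hq t
    rw [phiC_two_mul_succ hs, phiC_two_mul_succ hs, if_pos hA, if_neg (by omega), if_pos hA]

lemma isPartition_phiC (hs : RiseLeOne π) (hq : IsQuasiPartition π) :
    IsPartition (phiC fun i => 2 * π i) := by
  rintro (_ | j)
  · rw [phiC_two_mul_zero hs, phiC_two_mul_succ hs]
    have := hs 0
    have := hs 1
    have := hq 0
    split_ifs <;> omega
  · rw [phiC_two_mul_succ hs, phiC_two_mul_succ hs]
    have := hs j
    have := hs (j + 1)
    have := hs (j + 2)
    have := hq j
    have := hq (j + 1)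
    simp only [add_assoc, Nat.reduceAdd] at *
    split_ifs <;> omega

lemma phiC_two_mul_eq_zero (hs : RiseLeOne π) {N : ℕ} (hN : ∀ i, N ≤ i → π i = 0) {i : ℕ}
    (hi : N ≤ i) : phiC (fun j => 2 * π j) i = 0 := by
  have h0 := hN i hi
  cases i with
  | zero =>
    have h1 := hN 1 (by omega)
    rw [phiC_two_mul_zero hs]
    split_ifs <;> omega
  | succ j =>
    have h1 := hN (j + 2) (by omega)
    rw [phiC_two_mul_succ hs]
    split_ifs <;> omega

lemma isCPartition_phiC (hs : RiseLeOne π) (hq : IsQuasiPartition π) {N : ℕ}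
    (hN : ∀ i, N ≤ i → π i = 0) : IsCPartition (phiC fun i => 2 * π i) where
  isPartition := isPartition_phiC hs hq
  eventually_zero := ⟨N, fun _ => phiC_two_mul_eq_zero hs hN⟩
  even_ncard _ ha := (isDoubleOf_phiC hs hq).even_ncard_setOf_eq (isPartition_phiC hs hq)
    (fun _ => phiC_two_mul_succ_of_lt hs hq) (j := N)
    (by rw [phiC_two_mul_eq_zero hs hN le_rfl]; exact ha.pos) ha

end PhiC

section HPhiC

variable {l : ℕ → ℕ}

lemma runStart_le (hl : IsPartition l) (i : ℕ) : runStart l i ≤ i := by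
  have hanti : Antitone l := antitone_nat_of_succ_le hl
  calc runStart l i ≤ (Finset.range i : Set ℕ).ncard :=
        Set.ncard_le_ncard (fun j (hj : l i < l j) => by
          by_contra hji
          have := hanti (not_lt.1 (by simpa using hji))
          omega) (Finset.finite_toSet _)
    _ = i := by rw [Set.ncard_coe_finset, Finset.card_range]

lemma runStart_eq (hl : IsPartition l) {s i : ℕ} (hs : l s = l i) (hlt : ∀ j < s, l i < l j) :
    runStart l i = s := by
  have hanti : Antitone l := antitone_nat_of_succ_le hl
  have hset : {j | l i < l j} = (Finset.range s : Set ℕ) := by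
    ext j
    simp only [Set.mem_ofPred_eq, Finset.coe_range, Set.mem_Iio]
    refine ⟨fun hj => ?_, hlt j⟩
    by_contra hsj
    have := hanti (not_lt.1 hsj)
    omega
  rw [runStart, hset, Set.ncard_coe_finset, Finset.card_range]

lemma IsPC.isCPartition {n : ℕ} (hl : IsPC n l) : IsCPartition l :=
  ⟨hl.1, hl.2.1.imp fun _ => And.left, hl.2.2⟩

lemma IsCPartition.exists_oddRun (hl : IsCPartition l) {i : ℕ} (hO : ¬Even (l i)) :
    ∃ s e, Even (e - s) ∧ (∀ j, l j = l i ↔ s ≤ j ∧ j < e) ∧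
      ∀ j, s ≤ j → j < e → runStart l j = s := by
  have hanti : Antitone l := antitone_nat_of_succ_le hl.isPartition
  obtain ⟨N, hN⟩ := hl.eventually_zero
  have hlt : l N < l i := by
    rw [hN N le_rfl]
    exact Nat.pos_of_ne_zero fun h => hO (h ▸ Even.zero)
  obtain ⟨s, e, hse⟩ := hl.isPartition.exists_setOf_eq_eq_Ico hlt
  have mem : ∀ j, l j = l i ↔ s ≤ j ∧ j < e := fun j => by simpa using Set.ext_iff.1 hse j
  have heven : Even (e - s) := by
    simpa [hse, Set.ncard_coe_finset] using hl.even_ncard (l i) (Nat.not_even_iff_odd.1 hO)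
  refine ⟨s, e, heven, mem, fun j hsj hje => runStart_eq hl.isPartition ?_ fun j' hj' => ?_⟩
  · rw [(mem s).2 ⟨le_rfl, by omega⟩, (mem j).2 ⟨hsj, hje⟩]
  · have h1 := hanti (show j' ≤ j by omega)
    have h2 : l j' ≠ l i := fun h => by have := (mem j').1 h; omega
    have h3 := (mem j).2 ⟨hsj, hje⟩
    omega

lemma hphiC_of_even {i : ℕ} (hE : Even (l i)) : hphiC l i = l i / 2 := by
  rw [hphiC, if_pos hE]

lemma div_two_le_hphiC (l : ℕ → ℕ) (i : ℕ) : l i / 2 ≤ hphiC l i := by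
  unfold hphiC
  split_ifs <;> omega

lemma hphiC_le (l : ℕ → ℕ) (i : ℕ) : hphiC l i ≤ (l i + 1) / 2 := by
  unfold hphiC
  split_ifs with hE <;> rw [Nat.even_iff] at hE <;> omega

lemma hphiC_le_of_lt {i j : ℕ} (h : l j < l i) : hphiC l j ≤ hphiC l i := by
  have := hphiC_le l j
  have := div_two_le_hphiC l i
  omega

lemma hphiC_of_not_low {i : ℕ} (h : ¬(¬Even (l i) ∧ Even (i - runStart l i))) :
    hphiC l i = (l i + 1) / 2 := by
  unfold hphiC
  split_ifs with hE hlow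
  · rw [Nat.even_iff] at hE
    omega
  · exact absurd ⟨hE, hlow⟩ h
  · rw [Nat.even_iff] at hE
    omega

lemma two_mul_hphiC_add (l : ℕ → ℕ) (i : ℕ) :
    2 * hphiC l i + (if ¬Even (l i) ∧ Even (i - runStart l i) then 1 else 0) =
      l i + if ¬Even (l i) ∧ ¬Even (i - runStart l i) then 1 else 0 := by
  unfold hphiC
  split_ifs <;> simp only [Nat.even_iff] at * <;> omega

lemma riseLeOne_hphiC (hl : IsPartition l) : RiseLeOne (hphiC l) := fun i => by
  have := hphiC_le l (i + 1)
  have := div_two_le_hphiC l i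
  have := hl i
  omega

lemma IsCPartition.eq_succ_of_low (hl : IsCPartition l) {i : ℕ} (hO : ¬Even (l i))
    (hlow : Even (i - runStart l i)) :
    l (i + 1) = l i ∧ runStart l (i + 1) = runStart l i := by
  obtain ⟨s, e, heven, mem, hrs⟩ := hl.exists_oddRun hO
  obtain ⟨hsi, hie⟩ := (mem i).1 rfl
  rw [hrs i hsi hie] at hlow ⊢
  have : i + 1 < e := by
    rw [Nat.even_iff] at heven hlow
    omega
  exact ⟨(mem (i + 1)).2 ⟨by omega, this⟩, hrs _ (by omega) this⟩

lemma IsCPartition.hphiC_lt_succ_iff (hl : IsCPartition l) (i : ℕ) :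
    hphiC l i < hphiC l (i + 1) ↔ ¬Even (l i) ∧ Even (i - runStart l i) := by
  constructor
  · intro hlt
    by_contra hlow
    have := hphiC_of_not_low hlow
    have := hphiC_le l (i + 1)
    have := hl.isPartition i
    omega
  · rintro ⟨hO, hlow⟩
    obtain ⟨hv, hr⟩ := hl.eq_succ_of_low hO hlow
    have := runStart_le hl.isPartition i
    have hhigh : ¬Even (i + 1 - runStart l (i + 1)) := by
      rw [hr, Nat.even_iff]
      rw [Nat.even_iff] at hlow
      omega
    simp only [hphiC, hv, hO, hlow, hhigh, if_true, if_false]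
    omega

/-- `i + 1` carries the `k + 1` of a pair `k, k + 1` written into a run of `2k + 1`. -/
lemma IsCPartition.hphiC_lt_succ_iff_high (hl : IsCPartition l) (i : ℕ) :
    hphiC l i < hphiC l (i + 1) ↔ ¬Even (l (i + 1)) ∧ ¬Even (i + 1 - runStart l (i + 1)) := by
  rw [hl.hphiC_lt_succ_iff]
  constructor
  · rintro ⟨hO, hlow⟩
    obtain ⟨hv, hr⟩ := hl.eq_succ_of_low hO hlow
    have := runStart_le hl.isPartition i
    rw [hv, hr]
    rw [Nat.even_iff] at hlow
    exact ⟨hO, by rw [Nat.even_iff]; omega⟩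
  · rintro ⟨hO, hhigh⟩
    obtain ⟨s, e, -, mem, hrs⟩ := hl.exists_oddRun hO
    obtain ⟨hsi, hie⟩ := (mem (i + 1)).1 rfl
    rw [hrs _ hsi hie, Nat.even_iff] at hhigh
    have hsi' : s ≤ i := by omega
    have hv := (mem i).2 ⟨hsi', by omega⟩
    rw [hv, hrs i hsi' (by omega)]
    exact ⟨hO, by rw [Nat.even_iff]; omega⟩

lemma IsCPartition.isDoubleOf_hphiC (hl : IsCPartition l) : IsDoubleOf l (hphiC l) := by
  refine IsDoubleOf.of_succ ?_ fun i => ?_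
  · have := two_mul_hphiC_add l 0
    simp only [hl.hphiC_lt_succ_iff 0, Nat.zero_sub, Even.zero, not_true_eq_false, and_true,
      and_false] at *
    split_ifs at * <;> omega
  · have := two_mul_hphiC_add l (i + 1)
    rw [if_congr (hl.hphiC_lt_succ_iff_high i) rfl rfl,
      if_congr (hl.hphiC_lt_succ_iff (i + 1)) rfl rfl]
    split_ifs at * <;> omega

lemma IsCPartition.isQuasiPartition_hphiC (hl : IsCPartition l) :
    IsQuasiPartition (hphiC l) := by
  intro i
  have hle : l (i + 2) ≤ l i := (hl.isPartition (i + 1)).trans (hl.isPartition i)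
  rcases hle.lt_or_eq with hlt | heq
  · exact hphiC_le_of_lt hlt
  by_cases hE : Even (l i)
  · rw [hphiC_of_even hE, hphiC_of_even (heq ▸ hE), heq]
  obtain ⟨s, e, -, mem, hrs⟩ := hl.exists_oddRun hE
  obtain ⟨hsi, -⟩ := (mem i).1 rfl
  obtain ⟨-, hie⟩ := (mem (i + 2)).1 heq
  simp only [hphiC, heq, hrs i hsi (by omega), hrs (i + 2) (by omega) hie, hE, if_false,
    Nat.even_iff]
  split_ifs <;> omega

lemma phiC_hphiC (hl : IsCPartition l) : (phiC fun i => 2 * hphiC l i) = l :=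
  IsDoubleOf.left_unique
    (isDoubleOf_phiC (riseLeOne_hphiC hl.isPartition) hl.isQuasiPartition_hphiC)
    hl.isDoubleOf_hphiC

lemma hphiC_phiC {π : ℕ → ℕ} (hs : RiseLeOne π) (hq : IsQuasiPartition π) {N : ℕ}
    (hN : ∀ i, N ≤ i → π i = 0) : hphiC (phiC fun i => 2 * π i) = π :=
  IsDoubleOf.right_unique (isCPartition_phiC hs hq hN).isDoubleOf_hphiC (isDoubleOf_phiC hs hq)

end HPhiC

section Bipartition

variable {n : ℕ} {ρ σ : ℕ → ℕ}

lemma IsBipartition.isQuasiPartition_interleave (hb : IsBipartition n ρ σ) :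
    IsQuasiPartition (interleave ρ σ) :=
  isQuasiPartition_interleave_iff.2 ⟨hb.1, hb.2.1⟩

lemma IsBipartition.isDoubleOf_PhiC (hb : IsBipartition n ρ σ) (hq : QC ρ σ) :
    IsDoubleOf (PhiC ρ σ) (interleave ρ σ) :=
  isDoubleOf_phiC (riseLeOne_interleave_iff.2 hq) hb.isQuasiPartition_interleave

lemma IsBipartition.isPC_PhiC (hb : IsBipartition n ρ σ) (hq : QC ρ σ) : IsPC n (PhiC ρ σ) := by
  obtain ⟨N, hN, hsum⟩ := hb.2.2
  have hs := riseLeOne_interleave_iff.2 hq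
  have hC := isCPartition_phiC hs hb.isQuasiPartition_interleave hN
  refine ⟨hC.isPartition, ⟨N, fun _ => phiC_two_mul_eq_zero hs hN, ?_⟩, hC.even_ncard⟩
  rw [(hb.isDoubleOf_PhiC hq).psum_eq_of_eq_zero (hN N le_rfl), hsum]

lemma IsBipartition.hphiC_PhiC (hb : IsBipartition n ρ σ) (hq : QC ρ σ) :
    hphiC (PhiC ρ σ) = interleave ρ σ :=
  have ⟨_, hN, _⟩ := hb.2.2
  hphiC_phiC (riseLeOne_interleave_iff.2 hq) hb.isQuasiPartition_interleave hN

lemma IsPC.isBipartition_hphiC {l : ℕ → ℕ} (hl : IsPC n l) :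
    IsBipartition n (fun j => hphiC l (2 * j)) (fun j => hphiC l (2 * j + 1)) ∧
      QC (fun j => hphiC l (2 * j)) (fun j => hphiC l (2 * j + 1)) := by
  have hC := hl.isCPartition
  obtain ⟨N, hN, hsum⟩ := hl.2.1
  have hzero : ∀ i, N ≤ i → hphiC l i = 0 := fun i hi => by
    rw [hphiC_of_even (by rw [hN i hi]; exact Even.zero), hN i hi]
  rw [IsBipartition, ← and_assoc, ← isQuasiPartition_interleave_iff, ← riseLeOne_interleave_iff,
    interleave_evens_odds]
  refine ⟨⟨hC.isQuasiPartition_hphiC, N, hzero, ?_⟩, riseLeOne_hphiC hC.isPartition⟩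
  have := hC.isDoubleOf_hphiC.psum_eq_of_eq_zero (hzero N le_rfl)
  omega

lemma IsPC.PhiC_hphiC {l : ℕ → ℕ} (hl : IsPC n l) :
    PhiC (fun j => hphiC l (2 * j)) (fun j => hphiC l (2 * j + 1)) = l := by
  rw [PhiC, interleave_evens_odds, phiC_hphiC hl.isCPartition]

end Bipartition

/-- the posets `Q_n^C` and `P^C_{2n}` are isomorphic via the
mutually inverse order-preserving maps `Φ^C` and `Φ̂^C`. -/
theorem QC_PC_order_iso (n : ℕ) :
    (∀ ρ σ : ℕ → ℕ, IsBipartition n ρ σ → QC ρ σ → IsPC n (PhiC ρ σ)) ∧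
    (∀ l : ℕ → ℕ, IsPC n l →
      IsBipartition n (fun j => hphiC l (2 * j)) (fun j => hphiC l (2 * j + 1)) ∧
      QC (fun j => hphiC l (2 * j)) (fun j => hphiC l (2 * j + 1))) ∧
    (∀ ρ σ : ℕ → ℕ, IsBipartition n ρ σ → QC ρ σ →
      ∀ i, hphiC (PhiC ρ σ) i = interleave ρ σ i) ∧
    (∀ l : ℕ → ℕ, IsPC n l →
      ∀ i, PhiC (fun j => hphiC l (2 * j)) (fun j => hphiC l (2 * j + 1)) i = l i) ∧
    (∀ ρ σ μ ν : ℕ → ℕ, IsBipartition n ρ σ → QC ρ σ →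
      IsBipartition n μ ν → QC μ ν →
      (BiLE ρ σ μ ν ↔ Dominates (PhiC μ ν) (PhiC ρ σ))) :=
  ⟨fun _ _ hb hq => hb.isPC_PhiC hq,
    fun _ hl => hl.isBipartition_hphiC,
    fun _ _ hb hq => congrFun (hb.hphiC_PhiC hq),
    fun _ hl => congrFun hl.PhiC_hphiC,
    fun _ _ _ _ hb hq hb' hq' => (hb.isDoubleOf_PhiC hq).dominates_iff (hb'.isDoubleOf_PhiC hq')⟩
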